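/- arXiv:1308.4462 — 2 statements merged into one kernel-verified Lean document; each statement's English description precedes it below -/
import Mathlib

section
/- Fix integers m₁, m₂ ≥ 1. Assume (B2); assume there is Δ3 ∈ (0,∞) with 𝐖^{m₁}(ω,x)/𝐖^{m₁}(ω',x') ≤ Δ3 for all admissible (ω,x),(ω',x'), and that 0 < w_- := inf 𝐖^{m₁} ≤ sup 𝐖^{m₁} =: w_+ < ∞ over admissible configurations. Let M̃ be any member of 𝕄^{m₁,m₂} with constants ε̃_-, ε̃_+ and reference measure ν̃, and let L(ω,x,·) = R(ω,x,·)/J(ω,x) be the normalized kernel. Define the probability measure σ on E^{m₂} by σ(dx') ∝ ((dν^{⊗m₂}/dν̃)(x'))²·ν̃(dx'). Then there exist constants 0 < δ_- ≤ δ_+ < ∞ such that δ_-·σ(A) ≤ L(ω,x,A) ≤ δ_+·σ(A) for every admissible (ω,x) ∈ Ω×E^{m₁} and every measurable A ⊆ E^{m₂}; explicitly one may take δ_- = w_-²·(ε_-^{m₂}/(Δ3·ε̃_+))²·ε̃_-·C / sup_{(ω,x)} J(ω,x) and δ_+ = w_+²·(Δ3·ε_+^{m₂}/ε̃_-)²·ε̃_+·C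 / inf_{(ω,x)} J(ω,x), where C = ∫(dν^{⊗m₂}/dν̃)²dν̃. -/
/-!
Under (B2) every factor of `𝐌^{m₁,m₂}(ω,x,·)` lies between `ε₋ν` and `ε₊ν`, so its
`ν̃`-density `G` lies between `ε₋^{m₂} f` and `ε₊^{m₂} f`, where `f = dν^{⊗m₂}/dν̃`.
With `ψ = dM̃/dν̃ ∈ [ε̃₋, ε̃₊]`, the chain rule gives `φ = G/ψ`, so `R` has `ν̃`-density
`𝐖² G²/ψ`, which is squeezed between two constant multiples of `f²`. Hence `R` and its
mass `J` are squeezed between the same multiples of `f² ν̃` and of `C = ∫ f² dν̃`, and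
dividing gives the two-sided bound for `L = R/J`.
-/

open MeasureTheory ENNReal Filter Topology

noncomputable section

/-- The environment space `Ω = H^ℤ`. -/
abbrev Env (H : Type*) := ℤ → H

/-- The shift operator `z`: `(zω)(n) = ω(n+1)`. -/
def shift {H : Type*} (ω : Env H) : Env H := fun n => ω (n + 1)

/-- The inverse shift `z⁻¹`: `(z⁻¹ω)(n) = ω(n-1)`. -/
def shiftInv {H : Type*} (ω : Env H) : Env H := fun n => ω (n - 1)

/-- Iterates `z^{-k}` of the inverse shift. -/
def zitInv {H : Type*} : ℕ → Env H → Env H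
  | 0, ω => ω
  | n + 1, ω => shiftInv (zitInv n ω)

variable {H E : Type*} [MeasurableSpace H] [MeasurableSpace E]

/-- Iterates `z^k` of the shift. -/
def zit {H : Type*} : ℕ → Env H → Env H
  | 0, ω => ω
  | n + 1, ω => shift (zit n ω)

/-- The sub-Markov kernel `Q^ω(x,dx') = W(ω,x) M^ω(x,dx')`. -/
def Qk (M : Env H → E → Measure E) (W : Env H → E → ℝ) (ω : Env H) (x : E) :
    Measure E := ENNReal.ofReal (W ω x) • M ω x

/-- The compositions `Q_n^ω = Q^ω Q^{zω} ⋯ Q^{z^{n-1}ω}` (with `Q_0` the identity). -/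
def Qn (M : Env H → E → Measure E) (W : Env H → E → ℝ) :
    ℕ → Env H → E → Measure E
  | 0, _, x => Measure.dirac x
  | n + 1, ω, x => (Qn M W n ω x).bind (Qk M W (zit n ω))

/-- The total mass `σ Q_n^ω(1)`. -/
def QnMass (M : Env H → E → Measure E) (W : Env H → E → ℝ)
    (n : ℕ) (ω : Env H) (σ : Measure E) : ℝ≥0∞ :=
  (σ.bind (Qn M W n ω)) Set.univ

/-- `Φ_n^ω(σ)(A) = σQ_n^ω(A) / σQ_n^ω(1)`. -/
def PhiSet (M : Env H → E → Measure E) (W : Env H → E → ℝ)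
    (n : ℕ) (ω : Env H) (σ : Measure E) (A : Set E) : ℝ≥0∞ :=
  (σ.bind (Qn M W n ω)) A / QnMass M W n ω σ

/-- `Φ_n^ω(σ)(φ)` for a `ℝ≥0∞`-valued function `φ`. -/
def PhiFun (M : Env H → E → Measure E) (W : Env H → E → ℝ)
    (n : ℕ) (ω : Env H) (σ : Measure E) (φ : E → ℝ≥0∞) : ℝ≥0∞ :=
  (∫⁻ y, φ y ∂(σ.bind (Qn M W n ω))) / QnMass M W n ω σ

/-- The ratio `Q_n^ω(1)(x) / Φ_n^{z^{-n}ω}(σ)(Q_n^ω(1))` whose limit defines `h(ω,x)`. -/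
def ratioH (M : Env H → E → Measure E) (W : Env H → E → ℝ) (σ : Measure E)
    (n : ℕ) (ω : Env H) (x : E) : ℝ≥0∞ :=
  (Qn M W n ω x) Set.univ /
    PhiFun M W n (zitInv n ω) σ (fun y => (Qn M W n ω y) Set.univ)

/-- Admissibility of a particle configuration: positive total weight. -/
def Adm (W : Env H → E → ℝ) (ω : Env H) {m : ℕ} (x : Fin m → E) : Prop :=
  0 < ∑ j, W ω (x j)

/-- The average weight `𝐖^m(ω,x) = (1/m) Σ_j W(ω,x^j)`. -/
def Wavg (W : Env H → E → ℝ) (ω : Env H) {m : ℕ} (x : Fin m → E) : ℝ :=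
  (∑ j, W ω (x j)) / m

/-- The weighted mixture `Σ_j W(ω,x^j) M^ω(x^j,·) / Σ_j W(ω,x^j)`. -/
def mixK (M : Env H → E → Measure E) (W : Env H → E → ℝ) (ω : Env H)
    {m : ℕ} (x : Fin m → E) : Measure E :=
  (ENNReal.ofReal (∑ j, W ω (x j)))⁻¹ •
    ∑ j, ENNReal.ofReal (W ω (x j)) • M ω (x j)

/-- The particle transition kernel `𝐌^{m₁,m₂}(ω,x,·)`, the `m₂`-fold product of
the weighted mixture. -/
def Mpart (M : Env H → E → Measure E) (W : Env H → E → ℝ) (m₂ : ℕ) (ω : Env H)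
    {m₁ : ℕ} (x : Fin m₁ → E) : Measure (Fin m₂ → E) :=
  Measure.pi fun _ => mixK M W ω x

/-- The additive average `𝐡^m(ω,x) = (1/m) Σ_j h(ω,x^j)`. -/
def havg (h : Env H → E → ℝ) (ω : Env H) {m : ℕ} (x : Fin m → E) : ℝ :=
  (∑ j, h ω (x j)) / m

/-- The kernel `R(ω,x,dx') = 𝐖^{m₁}(ω,x)²·φ^ω(x,x')²·M̃(ω,x,dx')`, where
`φ^ω(x,·)` is the Radon–Nikodym derivative of `𝐌^{m₁,m₂}(ω,x,·)` with respect to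
`M̃(ω,x,·)`. -/
def Rker (M : Env H → E → Measure E) (W : Env H → E → ℝ) (m₁ m₂ : ℕ)
    (Mt : Env H → (Fin m₁ → E) → Measure (Fin m₂ → E))
    (ω : Env H) (x : Fin m₁ → E) : Measure (Fin m₂ → E) :=
  (Mt ω x).withDensity fun x' =>
    (ENNReal.ofReal (Wavg W ω x)) ^ 2 *
      ((Mpart M W m₂ ω x).rnDeriv (Mt ω x) x') ^ 2

/-- `J(ω,x) = R(ω,x,E^{m₂})`, the total mass of `R(ω,x,·)`. -/
def Jmass (M : Env H → E → Measure E) (W : Env H → E → ℝ) (m₁ m₂ : ℕ)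
    (Mt : Env H → (Fin m₁ → E) → Measure (Fin m₂ → E))
    (ω : Env H) (x : Fin m₁ → E) : ℝ≥0∞ :=
  Rker M W m₁ m₂ Mt ω x Set.univ

namespace MeasureTheory.Measure

variable {α : Type*} [MeasurableSpace α]

theorem pi_mono {ι : Type*} [Fintype ι] {β : ι → Type*} [∀ i, MeasurableSpace (β i)]
    {μ ν : ∀ i, Measure (β i)} (h : ∀ i, μ i ≤ ν i) : Measure.pi μ ≤ Measure.pi ν := by
  have houter : OuterMeasure.pi (fun i => (μ i).toOuterMeasure)
      ≤ OuterMeasure.pi fun i => (ν i).toOuterMeasure := by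
    rw [OuterMeasure.le_pi]
    exact fun s _ => (OuterMeasure.pi_pi_le _ s).trans
      (Finset.prod_le_prod' fun i _ => h i (s i))
  refine le_intro fun s hs _ => ?_
  rw [pi_def, pi_def, toMeasure_apply _ _ hs, toMeasure_apply _ _ hs]
  exact houter s

theorem pi_smul {ι : Type*} [Fintype ι] {β : ι → Type*} [∀ i, MeasurableSpace (β i)]
    (μ : ∀ i, Measure (β i)) [∀ i, IsFiniteMeasure (μ i)] {c : ι → ℝ≥0∞}
    (hc : ∀ i, c i ≠ ∞) :
    Measure.pi (fun i => c i • μ i) = (∏ i, c i) • Measure.pi μ := by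
  have := fun i => (μ i).smul_finite (hc i)
  refine pi_eq fun s _ => ?_
  simp only [smul_apply, smul_eq_mul, pi_pi, Finset.prod_mul_distrib]

theorem rnDeriv_le_of_le_withDensity {μ ν : Measure α} [SigmaFinite ν] {f : α → ℝ≥0∞}
    (h : μ ≤ ν.withDensity f) : μ.rnDeriv ν ≤ᵐ[ν] f :=
  ae_le_of_forall_setLIntegral_le_of_sigmaFinite (measurable_rnDeriv μ ν)
    fun s hs _ => (setLIntegral_rnDeriv_le s).trans
      (by rw [← withDensity_apply f hs]; exact h s)

theorem le_rnDeriv_of_withDensity_le {μ ν : Measure α} [SigmaFinite μ] [SigmaFinite ν]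
    (hμν : μ ≪ ν) {f : α → ℝ≥0∞} (hf : Measurable f) (h : ν.withDensity f ≤ μ) :
    f ≤ᵐ[ν] μ.rnDeriv ν :=
  ae_le_of_forall_setLIntegral_le_of_sigmaFinite hf fun s hs _ => by
    rw [← withDensity_apply f hs, setLIntegral_rnDeriv hμν s]
    exact h s

theorem smul_le_inv_sum_smul_sum {ι : Type*} (s : Finset ι) (w : ι → ℝ≥0∞)
    (hw₀ : ∑ i ∈ s, w i ≠ 0) (hw : ∑ i ∈ s, w i ≠ ∞) {μ : ι → Measure α} {ν : Measure α}
    {c : ℝ≥0∞} (h : ∀ i ∈ s, c • ν ≤ μ i) :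
    c • ν ≤ (∑ i ∈ s, w i)⁻¹ • ∑ i ∈ s, w i • μ i := by
  calc c • ν = (∑ i ∈ s, w i)⁻¹ • ∑ i ∈ s, w i • c • ν := by
        rw [← Finset.sum_smul, smul_smul, ENNReal.inv_mul_cancel hw₀ hw, one_smul]
    _ ≤ _ :=
        smul_le_smul_left _ (Finset.sum_le_sum fun i hi => smul_le_smul_left _ (h i hi))

theorem inv_sum_smul_sum_le_smul {ι : Type*} (s : Finset ι) (w : ι → ℝ≥0∞)
    (hw₀ : ∑ i ∈ s, w i ≠ 0) (hw : ∑ i ∈ s, w i ≠ ∞) {μ : ι → Measure α} {ν : Measure α}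
    {c : ℝ≥0∞} (h : ∀ i ∈ s, μ i ≤ c • ν) :
    (∑ i ∈ s, w i)⁻¹ • ∑ i ∈ s, w i • μ i ≤ c • ν := by
  calc _ ≤ (∑ i ∈ s, w i)⁻¹ • ∑ i ∈ s, w i • c • ν :=
        smul_le_smul_left _ (Finset.sum_le_sum fun i hi => smul_le_smul_left _ (h i hi))
    _ = c • ν := by
        rw [← Finset.sum_smul, smul_smul, ENNReal.inv_mul_cancel hw₀ hw, one_smul]

theorem withDensity_rnDeriv_sq_sandwich {μ ν ρ : Measure α} [SigmaFinite μ] [SigmaFinite ν]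
    [SigmaFinite ρ] {f : α → ℝ≥0∞} (hf : Measurable f) {c₁ c₂ a b : ℝ≥0∞} (ha : a ≠ 0)
    (hμ₁ : c₁ • ρ.withDensity f ≤ μ) (hμ₂ : μ ≤ c₂ • ρ.withDensity f)
    (hν₁ : a • ρ ≤ ν) (hν₂ : ν ≤ b • ρ) :
    (c₁ ^ 2 / b) • ρ.withDensity (fun x => f x ^ 2) ≤ ν.withDensity (μ.rnDeriv ν ^ 2) ∧
      ν.withDensity (μ.rnDeriv ν ^ 2) ≤ (c₂ ^ 2 / a) • ρ.withDensity (fun x => f x ^ 2) := by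
  have hνρ : ν ≪ ρ := absolutelyContinuous_of_le_smul hν₂
  have hμρ : μ ≪ ρ :=
    (absolutelyContinuous_of_le_smul hμ₂).trans (withDensity_absolutelyContinuous _ _)
  have hμν : μ ≪ ν :=
    hμρ.trans ((absolutelyContinuous_smul ha).trans (absolutelyContinuous_of_le hν₁))
  have hψ₁ : (fun _ => a) ≤ᵐ[ρ] ν.rnDeriv ρ :=
    le_rnDeriv_of_withDensity_le hνρ measurable_const (by rwa [withDensity_const])
  have hψ₂ : ν.rnDeriv ρ ≤ᵐ[ρ] fun _ => b :=
    rnDeriv_le_of_le_withDensity (by rwa [withDensity_const])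
  have hG₁ : c₁ • f ≤ᵐ[ρ] μ.rnDeriv ρ :=
    le_rnDeriv_of_withDensity_le hμρ (hf.const_smul c₁) (by rwa [withDensity_smul _ hf])
  have hG₂ : μ.rnDeriv ρ ≤ᵐ[ρ] c₂ • f :=
    rnDeriv_le_of_le_withDensity (by rwa [withDensity_smul _ hf])
  have hf2 : Measurable fun x => f x ^ 2 := hf.pow_const 2
  have hφ2 : Measurable (μ.rnDeriv ν ^ 2) := (measurable_rnDeriv μ ν).pow_const 2
  -- `dμ/dν = (dμ/dρ) / (dν/dρ)`, so the `ν`-density `(dμ/dν)²` becomes the `ρ`-density below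
  have hdens :
      ν.withDensity (μ.rnDeriv ν ^ 2) = ρ.withDensity (μ.rnDeriv ρ ^ 2 / ν.rnDeriv ρ) := by
    calc ν.withDensity (μ.rnDeriv ν ^ 2)
        = (ρ.withDensity (ν.rnDeriv ρ)).withDensity (μ.rnDeriv ν ^ 2) := by
          rw [withDensity_rnDeriv_eq ν ρ hνρ]
      _ = ρ.withDensity (ν.rnDeriv ρ * μ.rnDeriv ν ^ 2) :=
          (withDensity_mul ρ (measurable_rnDeriv ν ρ) hφ2).symm
      _ = _ := by
          refine withDensity_congr_ae ?_
          filter_upwards [rnDeriv_mul_rnDeriv hμν, hψ₁, rnDeriv_lt_top ν ρ]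
            with x hchain hpos hfin
          simp only [Pi.mul_apply, Pi.pow_apply, Pi.div_apply] at hchain ⊢
          rw [← hchain, mul_pow, sq (ν.rnDeriv ρ x), ← mul_assoc,
            ENNReal.mul_div_cancel_right ((ha.bot_lt.trans_le hpos).ne') hfin.ne, mul_comm]
  rw [hdens, ← withDensity_smul _ hf2, ← withDensity_smul _ hf2]
  constructor
  · refine withDensity_mono ?_
    filter_upwards [hψ₂, hG₁] with x hψ hG
    calc (c₁ ^ 2 / b) * f x ^ 2 = (c₁ * f x) ^ 2 / b := by simp only [div_eq_mul_inv]; ring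
      _ ≤ μ.rnDeriv ρ x ^ 2 / ν.rnDeriv ρ x := ENNReal.div_le_div (by gcongr; exact hG) hψ
  · refine withDensity_mono ?_
    filter_upwards [hψ₁, hG₂] with x hψ hG
    calc μ.rnDeriv ρ x ^ 2 / ν.rnDeriv ρ x ≤ (c₂ * f x) ^ 2 / a :=
          ENNReal.div_le_div (by gcongr; exact hG) hψ
      _ = (c₂ ^ 2 / a) * f x ^ 2 := by simp only [div_eq_mul_inv]; ring

theorem lintegral_rnDeriv_sq_ne_zero {μ ν : Measure α} [SigmaFinite μ] [SigmaFinite ν]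
    [NeZero μ] (hμν : μ ≪ ν) : ∫⁻ x, μ.rnDeriv ν x ^ 2 ∂ν ≠ 0 := by
  rw [Ne, lintegral_eq_zero_iff ((measurable_rnDeriv _ _).pow_const 2)]
  intro h
  apply NeZero.ne μ
  rw [← withDensity_rnDeriv_eq _ _ hμν,
    withDensity_congr_ae (h.mono fun _ => (pow_eq_zero_iff two_ne_zero).1)]
  exact withDensity_zero

theorem inv_measure_univ_smul_sandwich {R σ : Measure α} {k₁ k₂ : ℝ≥0∞} (hk₁ : k₁ ≠ 0)
    (hk₂ : k₂ ≠ ∞) (hσ₀ : σ Set.univ ≠ 0) (hσ : σ Set.univ ≠ ∞) (h₁ : k₁ • σ ≤ R)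
    (h₂ : R ≤ k₂ • σ) :
    (k₁ / k₂) • (σ Set.univ)⁻¹ • σ ≤ (R Set.univ)⁻¹ • R ∧
      (R Set.univ)⁻¹ • R ≤ (k₂ / k₁) • (σ Set.univ)⁻¹ • σ := by
  simp only [le_iff', smul_apply, smul_eq_mul] at h₁ h₂ ⊢
  refine ⟨fun s => ?_, fun s => ?_⟩
  · calc k₁ / k₂ * ((σ Set.univ)⁻¹ * σ s) = (k₂ * σ Set.univ)⁻¹ * (k₁ * σ s) := by
          rw [ENNReal.mul_inv (.inr hσ) (.inl hk₂), div_eq_mul_inv]; ring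
      _ ≤ (R Set.univ)⁻¹ * R s := by gcongr; exacts [h₂ _, h₁ s]
  · calc (R Set.univ)⁻¹ * R s ≤ (k₁ * σ Set.univ)⁻¹ * (k₂ * σ s) := by
          gcongr; exacts [h₁ _, h₂ s]
      _ = k₂ / k₁ * ((σ Set.univ)⁻¹ * σ s) := by
          rw [ENNReal.mul_inv (.inl hk₁) (.inr hσ₀), div_eq_mul_inv]; ring

theorem exists_inv_measure_univ_smul_sandwich {ι : Type*} {s : Set ι} {R : ι → Measure α}
    {σ : Measure α} {k₁ k₂ : ℝ≥0∞} (hk₁ : k₁ ≠ 0) (hk₂ : k₂ ≠ ∞) (hk : k₁ ≤ k₂)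
    (hσ₀ : σ Set.univ ≠ 0) (hσ : σ Set.univ ≠ ∞)
    (hR : ∀ i ∈ s, k₁ • σ ≤ R i ∧ R i ≤ k₂ • σ) :
    ∃ δm δp : ℝ, 0 < δm ∧ δm ≤ δp ∧ ∀ i ∈ s,
      ENNReal.ofReal δm • (σ Set.univ)⁻¹ • σ ≤ (R i Set.univ)⁻¹ • R i ∧
        (R i Set.univ)⁻¹ • R i ≤ ENNReal.ofReal δp • (σ Set.univ)⁻¹ • σ := by
  have hδm : k₁ / k₂ ≠ ∞ :=
    ENNReal.div_ne_top (ne_top_of_le_ne_top hk₂ hk) (hk₁.bot_lt.trans_le hk).ne'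
  have hδp : k₂ / k₁ ≠ ∞ := ENNReal.div_ne_top hk₂ hk₁
  refine ⟨(k₁ / k₂).toReal, (k₂ / k₁).toReal,
    ENNReal.toReal_pos (ENNReal.div_pos hk₁ hk₂).ne' hδm,
    ENNReal.toReal_mono hδp (ENNReal.div_le_div hk hk), fun i hi => ?_⟩
  rw [ENNReal.ofReal_toReal hδm, ENNReal.ofReal_toReal hδp]
  exact inv_measure_univ_smul_sandwich hk₁ hk₂ hσ₀ hσ (hR i hi).1 (hR i hi).2

end MeasureTheory.Measure

theorem mixK_sandwich {H E : Type*} [MeasurableSpace E] {M : Env H → E → Measure E}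
    {W : Env H → E → ℝ} {ω : Env H} {m : ℕ} {x : Fin m → E} (hW : ∀ j, 0 ≤ W ω (x j))
    (hx : Adm W ω x) {ν : Measure E} {a b : ℝ≥0∞}
    (hM : ∀ j, a • ν ≤ M ω (x j) ∧ M ω (x j) ≤ b • ν) :
    a • ν ≤ mixK M W ω x ∧ mixK M W ω x ≤ b • ν := by
  have hsum : ENNReal.ofReal (∑ j, W ω (x j)) = ∑ j, ENNReal.ofReal (W ω (x j)) :=
    ENNReal.ofReal_sum_of_nonneg fun j _ => hW j
  have hsum₀ : ∑ j, ENNReal.ofReal (W ω (x j)) ≠ 0 := hsum ▸ (ENNReal.ofReal_pos.2 hx).ne'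
  have hsum_top : ∑ j, ENNReal.ofReal (W ω (x j)) ≠ ∞ := hsum ▸ ofReal_ne_top
  rw [mixK, hsum]
  exact ⟨Measure.smul_le_inv_sum_smul_sum _ _ hsum₀ hsum_top fun j _ => (hM j).1,
    Measure.inv_sum_smul_sum_le_smul _ _ hsum₀ hsum_top fun j _ => (hM j).2⟩

theorem Rker_sandwich {H E : Type*} [MeasurableSpace E] {M : Env H → E → Measure E}
    {W : Env H → E → ℝ} {m₁ m₂ : ℕ} {Mt : Env H → (Fin m₁ → E) → Measure (Fin m₂ → E)}
    {ω : Env H} {x : Fin m₁ → E}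
    {ν : Measure E} [IsFiniteMeasure ν] {νt : Measure (Fin m₂ → E)} [IsFiniteMeasure νt]
    (hac : Measure.pi (fun _ : Fin m₂ => ν) ≪ νt) {a b a' b' w₁ w₂ : ℝ≥0∞}
    (ha : a ≠ ∞) (hb : b ≠ ∞) (ha' : a' ≠ 0) (hb' : b' ≠ ∞)
    (hmix : a • ν ≤ mixK M W ω x ∧ mixK M W ω x ≤ b • ν)
    (hMt : a' • νt ≤ Mt ω x ∧ Mt ω x ≤ b' • νt)
    (hW : w₁ ≤ ENNReal.ofReal (Wavg W ω x) ∧ ENNReal.ofReal (Wavg W ω x) ≤ w₂) :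
    (w₁ ^ 2 * (a ^ m₂) ^ 2 / b') • νt.withDensity
        (fun x' => (Measure.pi fun _ : Fin m₂ => ν).rnDeriv νt x' ^ 2)
        ≤ Rker M W m₁ m₂ Mt ω x ∧
      Rker M W m₁ m₂ Mt ω x ≤ (w₂ ^ 2 * (b ^ m₂) ^ 2 / a') • νt.withDensity
        (fun x' => (Measure.pi fun _ : Fin m₂ => ν).rnDeriv νt x' ^ 2) := by
  set P := Measure.pi fun _ : Fin m₂ => ν
  have hP : νt.withDensity (P.rnDeriv νt) = P := Measure.withDensity_rnDeriv_eq _ _ hac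
  have hpi : ∀ c ≠ ∞,
      Measure.pi (fun _ : Fin m₂ => c • ν) = c ^ m₂ • νt.withDensity (P.rnDeriv νt) :=
    fun c hc => by rw [Measure.pi_smul _ fun _ => hc, hP, Finset.prod_const, Finset.card_fin]
  have hMpart₁ : a ^ m₂ • νt.withDensity (P.rnDeriv νt) ≤ Mpart M W m₂ ω x :=
    hpi a ha ▸ Measure.pi_mono fun _ => hmix.1
  have hMpart₂ : Mpart M W m₂ ω x ≤ b ^ m₂ • νt.withDensity (P.rnDeriv νt) :=
    hpi b hb ▸ Measure.pi_mono fun _ => hmix.2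
  have := P.smul_finite (pow_ne_top hb (n := m₂))
  have : IsFiniteMeasure (Mpart M W m₂ ω x) := isFiniteMeasure_of_le _ (hP ▸ hMpart₂)
  have := νt.smul_finite hb'
  have : IsFiniteMeasure (Mt ω x) := isFiniteMeasure_of_le _ hMt.2
  obtain ⟨h₁, h₂⟩ := Measure.withDensity_rnDeriv_sq_sandwich (Measure.measurable_rnDeriv _ _)
    ha' hMpart₁ hMpart₂ hMt.1 hMt.2
  have hR : Rker M W m₁ m₂ Mt ω x = ENNReal.ofReal (Wavg W ω x) ^ 2 •
      (Mt ω x).withDensity ((Mpart M W m₂ ω x).rnDeriv (Mt ω x) ^ 2) :=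
    withDensity_smul _ ((Measure.measurable_rnDeriv _ _).pow_const 2)
  rw [hR, mul_div_assoc, mul_div_assoc, mul_smul, mul_smul]
  constructor
  · calc _ ≤ ENNReal.ofReal (Wavg W ω x) ^ 2 • ((a ^ m₂) ^ 2 / b') • _ := by
          gcongr; exact hW.1
      _ ≤ _ := smul_le_smul_left _ h₁
  · calc _ ≤ ENNReal.ofReal (Wavg W ω x) ^ 2 • ((b ^ m₂) ^ 2 / a') • _ :=
          smul_le_smul_left _ h₂
      _ ≤ _ := by gcongr; exact hW.2

theorem lemma2_L_sandwich_general
    (M : Env H → E → Measure E) (W : Env H → E → ℝ)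
    (hWnn : ∀ ω x, 0 ≤ W ω x)
    (m₁ m₂ : ℕ)
    -- (B2), minorisation/majorisation part
    (εm εp : ℝ) (hεm : 0 < εm) (hεmp : εm ≤ εp)
    (ν : Measure E) [IsProbabilityMeasure ν]
    (hB2b : ∀ ω x, ∀ A : Set E, MeasurableSet A →
        ENNReal.ofReal εm * ν A ≤ M ω x A ∧ M ω x A ≤ ENNReal.ofReal εp * ν A)
    -- uniform bounds on average weights over admissible configurations
    (wm wp : ℝ) (hwm : 0 < wm) (hwmp : wm ≤ wp)
    (hWbd : ∀ ω : Env H, ∀ x : Fin m₁ → E, Adm W ω x →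
        wm ≤ Wavg W ω x ∧ Wavg W ω x ≤ wp)
    -- M̃: a member of the class 𝕄^{m₁,m₂}, with its constants and reference measure
    (Mt : Env H → (Fin m₁ → E) → Measure (Fin m₂ → E))
    (etm etp : ℝ) (hetm : 0 < etm) (hetmp : etm ≤ etp)
    (νt : Measure (Fin m₂ → E)) [IsProbabilityMeasure νt]
    (hMtbd : ∀ ω, ∀ x : Fin m₁ → E, Adm W ω x →
        ∀ D : Set (Fin m₂ → E), MeasurableSet D →
          ENNReal.ofReal etm * νt D ≤ Mt ω x D ∧
          Mt ω x D ≤ ENNReal.ofReal etp * νt D)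
    (hac : (Measure.pi fun _ : Fin m₂ => ν) ≪ νt)
    (hL2 : ∫⁻ x', ((Measure.pi fun _ : Fin m₂ => ν).rnDeriv νt x') ^ 2 ∂νt < ∞) :
    ∃ δm δp : ℝ, 0 < δm ∧ δm ≤ δp ∧
      ∀ ω : Env H, ∀ x : Fin m₁ → E, Adm W ω x →
        ∀ A : Set (Fin m₂ → E), MeasurableSet A →
          ENNReal.ofReal δm *
            (((∫⁻ x', ((Measure.pi fun _ : Fin m₂ => ν).rnDeriv νt x') ^ 2 ∂νt)⁻¹ •
              νt.withDensity fun x' =>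
                ((Measure.pi fun _ : Fin m₂ => ν).rnDeriv νt x') ^ 2) A)
            ≤ ((Jmass M W m₁ m₂ Mt ω x)⁻¹ • Rker M W m₁ m₂ Mt ω x) A ∧
          ((Jmass M W m₁ m₂ Mt ω x)⁻¹ • Rker M W m₁ m₂ Mt ω x) A
            ≤ ENNReal.ofReal δp *
              (((∫⁻ x', ((Measure.pi fun _ : Fin m₂ => ν).rnDeriv νt x') ^ 2 ∂νt)⁻¹ •
                νt.withDensity fun x' =>
                  ((Measure.pi fun _ : Fin m₂ => ν).rnDeriv νt x') ^ 2) A) := by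
  set P := Measure.pi fun _ : Fin m₂ => ν
  set σ := νt.withDensity fun x' => P.rnDeriv νt x' ^ 2
  have hC : ∫⁻ x', P.rnDeriv νt x' ^ 2 ∂νt = σ Set.univ := by
    rw [withDensity_apply _ .univ, Measure.restrict_univ]
  have hσ₀ : σ Set.univ ≠ 0 := by rw [← hC]; exact Measure.lintegral_rnDeriv_sq_ne_zero hac
  have hR : ∀ p ∈ {p : Env H × (Fin m₁ → E) | Adm W p.1 p.2},
      (ENNReal.ofReal wm ^ 2 * (ENNReal.ofReal εm ^ m₂) ^ 2 / ENNReal.ofReal etp) • σ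
        ≤ Rker M W m₁ m₂ Mt p.1 p.2 ∧
      Rker M W m₁ m₂ Mt p.1 p.2
        ≤ (ENNReal.ofReal wp ^ 2 * (ENNReal.ofReal εp ^ m₂) ^ 2 / ENNReal.ofReal etm) • σ :=
    fun p hp => Rker_sandwich hac ofReal_ne_top ofReal_ne_top (by simp [hetm]) ofReal_ne_top
      (mixK_sandwich (fun j => hWnn p.1 (p.2 j)) hp fun j =>
        ⟨Measure.le_intro fun A hA _ => (hB2b p.1 (p.2 j) A hA).1,
          Measure.le_intro fun A hA _ => (hB2b p.1 (p.2 j) A hA).2⟩)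
      ⟨Measure.le_intro fun D hD _ => (hMtbd p.1 p.2 hp D hD).1,
        Measure.le_intro fun D hD _ => (hMtbd p.1 p.2 hp D hD).2⟩
      ⟨ENNReal.ofReal_le_ofReal (hWbd p.1 p.2 hp).1, ENNReal.ofReal_le_ofReal (hWbd p.1 p.2 hp).2⟩
  obtain ⟨δm, δp, hδm, hδ, hL⟩ := Measure.exists_inv_measure_univ_smul_sandwich
    (by simp [ENNReal.div_eq_zero_iff, hwm, hεm])
    (ENNReal.div_ne_top (by finiteness) (by simp [hetm]))
    (by gcongr) hσ₀ (hC ▸ hL2.ne) hR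
  refine ⟨δm, δp, hδm, hδ, fun ω x hx A _ => ?_⟩
  obtain ⟨hL₁, hL₂⟩ := hL (ω, x) hx
  rw [hC]
  simp only [Measure.smul_apply, smul_eq_mul, Jmass] at hL₁ hL₂ ⊢
  exact ⟨hL₁ A, hL₂ A⟩

/-- **Lemma 2 (L-kernel sandwich).** Fix `m₁, m₂ ≥ 1`, assume (B2), a uniform bound
`Δ3` on ratios of average weights, and uniform bounds `0 < w₋ ≤ 𝐖 ≤ w₊ < ∞`. For
any member `M̃` of `𝕄^{m₁,m₂}` there exist `0 < δ₋ ≤ δ₊ < ∞` such that the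
normalised kernel `L(ω,x,·) = R(ω,x,·)/J(ω,x)` satisfies
`δ₋·σ(A) ≤ L(ω,x,A) ≤ δ₊·σ(A)`, where `σ(dx') ∝ ((dν^{⊗m₂}/dν̃)(x'))²·ν̃(dx')`. -/
theorem lemma2_L_sandwich
    (M : Env H → E → Measure E) (W : Env H → E → ℝ)
    (hMprob : ∀ ω x, IsProbabilityMeasure (M ω x))
    (hMmeas : Measurable fun p : Env H × E => M p.1 p.2)
    (hWmeas : Measurable fun p : Env H × E => W p.1 p.2)
    (hWnn : ∀ ω x, 0 ≤ W ω x)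
    (m₁ m₂ : ℕ) (hm₁ : 1 ≤ m₁) (hm₂ : 1 ≤ m₂)
    -- (B2), minorisation/majorisation part
    (εm εp : ℝ) (hεm : 0 < εm) (hεmp : εm ≤ εp)
    (ν : Measure E) [IsProbabilityMeasure ν]
    (hB2b : ∀ ω x, ∀ A : Set E, MeasurableSet A →
        ENNReal.ofReal εm * ν A ≤ M ω x A ∧ M ω x A ≤ ENNReal.ofReal εp * ν A)
    -- uniform bounds on average weights over admissible configurations
    (Δ3 : ℝ) (hΔ3 : 0 < Δ3)
    (hWr : ∀ ω ω' : Env H, ∀ x x' : Fin m₁ → E, Adm W ω x → Adm W ω' x' →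
        Wavg W ω x / Wavg W ω' x' ≤ Δ3)
    (wm wp : ℝ) (hwm : 0 < wm) (hwmp : wm ≤ wp)
    (hWbd : ∀ ω : Env H, ∀ x : Fin m₁ → E, Adm W ω x →
        wm ≤ Wavg W ω x ∧ Wavg W ω x ≤ wp)
    -- M̃: a member of the class 𝕄^{m₁,m₂}, with its constants and reference measure
    (Mt : Env H → (Fin m₁ → E) → Measure (Fin m₂ → E))
    (hMtmeas : ∀ ω, Measurable (Mt ω))
    (hMtprob : ∀ ω x, IsProbabilityMeasure (Mt ω x))
    (etm etp : ℝ) (hetm : 0 < etm) (hetmp : etm ≤ etp)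
    (νt : Measure (Fin m₂ → E)) [IsProbabilityMeasure νt]
    (hMtbd : ∀ ω, ∀ x : Fin m₁ → E, Adm W ω x →
        ∀ D : Set (Fin m₂ → E), MeasurableSet D →
          ENNReal.ofReal etm * νt D ≤ Mt ω x D ∧
          Mt ω x D ≤ ENNReal.ofReal etp * νt D)
    (hac : (Measure.pi fun _ : Fin m₂ => ν) ≪ νt)
    (hL2 : ∫⁻ x', ((Measure.pi fun _ : Fin m₂ => ν).rnDeriv νt x') ^ 2 ∂νt < ∞) :
    ∃ δm δp : ℝ, 0 < δm ∧ δm ≤ δp ∧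
      ∀ ω : Env H, ∀ x : Fin m₁ → E, Adm W ω x →
        ∀ A : Set (Fin m₂ → E), MeasurableSet A →
          ENNReal.ofReal δm *
            (((∫⁻ x', ((Measure.pi fun _ : Fin m₂ => ν).rnDeriv νt x') ^ 2 ∂νt)⁻¹ •
              νt.withDensity fun x' =>
                ((Measure.pi fun _ : Fin m₂ => ν).rnDeriv νt x') ^ 2) A)
            ≤ ((Jmass M W m₁ m₂ Mt ω x)⁻¹ • Rker M W m₁ m₂ Mt ω x) A ∧
          ((Jmass M W m₁ m₂ Mt ω x)⁻¹ • Rker M W m₁ m₂ Mt ω x) A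
            ≤ ENNReal.ofReal δp *
              (((∫⁻ x', ((Measure.pi fun _ : Fin m₂ => ν).rnDeriv νt x') ^ 2 ∂νt)⁻¹ •
                νt.withDensity fun x' =>
                  ((Measure.pi fun _ : Fin m₂ => ν).rnDeriv νt x') ^ 2) A) :=
  lemma2_L_sandwich_general M W hWnn m₁ m₂ εm εp hεm hεmp ν hB2b wm wp hwm hwmp hWbd Mt etm etp hetm
    hetmp νt hMtbd hac hL2
end
end

section
/- Assume (B2) and let h : Ω×E → (0,∞) be measurable with 0 < h_- := inf_{(ω,x)} h(ω,x) ≤ sup_{(ω,x)} h(ω,x) =: h_+ < ∞ (as holds for the eigenfunction of Proposition 2 by its part 3). Fix integers m₁, m₂ ≥ 1 and define, for admissible (ω,x) ∈ Ω×E^{m₁}, the h-twisted particle kernel M̃(ω,x,D) = [∫_D 𝐌^{m₁,m₂}(ω,x,dx')·𝐡^{m₂}(zω,x')] / [∫_{E^{m₂}} 𝐌^{m₁,m₂}(ω,x,du)·𝐡^{m₂}(zω,u)] for measurable D ⊆ E^{m₂}, where 𝐡^{m₂}(ω,x) = (1/m₂)Σ_{j=1}^{m₂}h(ω,x^j). Then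 M̃ belongs to the class 𝕄^{m₁,m₂}: taking ν̃ = ν^{⊗m₂}, one has ε̃_-·ν̃(·) ≤ M̃(ω,x,·) ≤ ε̃_+·ν̃(·) for all admissible (ω,x) with ε̃_- = ε_-^{m₂}h_- /(ε_+^{m₂}h_+) and ε̃_+ = ε_+^{m₂}h_+/(ε_-^{m₂}h_-); moreover ν^{⊗m₂} ≪ ν̃ and ∫(dν^{⊗m₂}/dν̃)²dν̃ = 1 < ∞. -/
open MeasureTheory ENNReal Filter Topology

noncomputable section

variable {H E : Type*} [MeasurableSpace H] [MeasurableSpace E]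

/-- The `h`-twisted particle kernel
`M̃(ω,x,D) = [∫_D 𝐌^{m₁,m₂}(ω,x,dx')·𝐡^{m₂}(zω,x')] / [∫ 𝐌^{m₁,m₂}(ω,x,du)·𝐡^{m₂}(zω,u)]`. -/
def Mtw (M : Env H → E → Measure E) (W : Env H → E → ℝ) (h : Env H → E → ℝ)
    (m₂ : ℕ) (ω : Env H) {m₁ : ℕ} (x : Fin m₁ → E) : Measure (Fin m₂ → E) :=
  (∫⁻ u, ENNReal.ofReal (havg h (shift ω) u) ∂(Mpart M W m₂ ω x))⁻¹ •
    (Mpart M W m₂ ω x).withDensity fun x' => ENNReal.ofReal (havg h (shift ω) x')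

/-!
Renormalising `𝐌^{m₁,m₂}(ω,x,·)` against the density `𝐡^{m₂}(zω,·) ∈ [h₋,h₊]` changes its
ratio to `ν^{⊗m₂}` by a factor in `[h₋/h₊, h₊/h₋]`, whatever the total mass of the measure
being twisted. Under (B2) every weighted mixture of the kernels `M^ω(x^j,·)` lies between
`ε₋ν` and `ε₊ν`, so its `m₂`-fold product lies between `ε₋^{m₂}ν^{⊗m₂}` and `ε₊^{m₂}ν^{⊗m₂}`.
With `ν̃ = ν^{⊗m₂}` the Radon–Nikodym derivative `dν^{⊗m₂}/dν̃` is `1` almost everywhere.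
-/

namespace MeasureTheory.Measure

variable {α : Type*} [MeasurableSpace α]

theorem isFiniteMeasure_smul_of_ne_top {c : ℝ≥0∞} (hc : c ≠ ∞) (μ : Measure α)
    [IsFiniteMeasure μ] : IsFiniteMeasure (c • μ) :=
  ⟨by simpa using ENNReal.mul_lt_top hc.lt_top (measure_lt_top μ Set.univ)⟩

theorem pi_fin_mono {n : ℕ} {β : Fin n → Type*} [∀ i, MeasurableSpace (β i)]
    {μ ν : (i : Fin n) → Measure (β i)} [∀ i, SigmaFinite (μ i)] [∀ i, SigmaFinite (ν i)]
    (h : ∀ i, μ i ≤ ν i) : Measure.pi μ ≤ Measure.pi ν := by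
  induction n with
  | zero => rw [Measure.pi_of_empty, Measure.pi_of_empty]
  | succ n ih =>
    rw [← ((measurePreserving_piFinSuccAbove μ 0).symm _).map_eq,
      ← ((measurePreserving_piFinSuccAbove ν 0).symm _).map_eq]
    exact Measure.map_mono (Measure.prod_mono (h 0) (ih fun i => h _))
      (MeasurableEquiv.piFinSuccAbove β 0).symm.measurable

theorem pi_const_smul {ι : Type*} [Fintype ι] (c : ℝ≥0∞) (μ : Measure α) [SigmaFinite μ]
    [SigmaFinite (c • μ)] :
    Measure.pi (fun _ : ι => c • μ) = c ^ Fintype.card ι • Measure.pi fun _ : ι => μ := by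
  refine Measure.pi_eq fun s _ => ?_
  simp only [smul_apply, pi_pi, smul_eq_mul, Finset.prod_mul_distrib, Finset.prod_const,
    Finset.card_univ]

theorem pi_le_pow_smul_pi {n : ℕ} {c : ℝ≥0∞} {μ ν : Measure α} [SigmaFinite μ] [SigmaFinite ν]
    [SigmaFinite (c • ν)] (h : μ ≤ c • ν) :
    Measure.pi (fun _ : Fin n => μ) ≤ c ^ n • Measure.pi fun _ : Fin n => ν := by
  simpa only [pi_const_smul, Fintype.card_fin] using pi_fin_mono fun _ : Fin n => h

theorem pow_smul_pi_le_pi {n : ℕ} {c : ℝ≥0∞} {μ ν : Measure α} [SigmaFinite μ] [SigmaFinite ν]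
    [SigmaFinite (c • ν)] (h : c • ν ≤ μ) :
    c ^ n • Measure.pi (fun _ : Fin n => ν) ≤ Measure.pi fun _ : Fin n => μ := by
  simpa only [pi_const_smul, Fintype.card_fin] using pi_fin_mono fun _ : Fin n => h

theorem inv_sum_smul_sum_le {ι : Type*} {s : Finset ι} {w : ι → ℝ≥0∞} {μ : ι → Measure α}
    {ν : Measure α} (hw : ∑ i ∈ s, w i ≠ 0) (hw' : ∑ i ∈ s, w i ≠ ∞) (h : ∀ i ∈ s, μ i ≤ ν) :
    (∑ i ∈ s, w i)⁻¹ • ∑ i ∈ s, w i • μ i ≤ ν := by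
  calc (∑ i ∈ s, w i)⁻¹ • ∑ i ∈ s, w i • μ i
      ≤ (∑ i ∈ s, w i)⁻¹ • ∑ i ∈ s, w i • ν := by gcongr with i hi; exact h i hi
    _ = ν := by rw [← Finset.sum_smul, smul_smul, ENNReal.inv_mul_cancel hw hw', one_smul]

theorem le_inv_sum_smul_sum {ι : Type*} {s : Finset ι} {w : ι → ℝ≥0∞} {μ : ι → Measure α}
    {ν : Measure α} (hw : ∑ i ∈ s, w i ≠ 0) (hw' : ∑ i ∈ s, w i ≠ ∞) (h : ∀ i ∈ s, ν ≤ μ i) :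
    ν ≤ (∑ i ∈ s, w i)⁻¹ • ∑ i ∈ s, w i • μ i := by
  calc ν = (∑ i ∈ s, w i)⁻¹ • ∑ i ∈ s, w i • ν := by
        rw [← Finset.sum_smul, smul_smul, ENNReal.inv_mul_cancel hw hw', one_smul]
    _ ≤ (∑ i ∈ s, w i)⁻¹ • ∑ i ∈ s, w i • μ i := by gcongr with i hi; exact h i hi


def twist (ρ : Measure α) (g : α → ℝ≥0∞) : Measure α :=
  (∫⁻ a, g a ∂ρ)⁻¹ • ρ.withDensity g

theorem twist_apply (ρ : Measure α) (g : α → ℝ≥0∞) {s : Set α} (hs : MeasurableSet s) :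
    ρ.twist g s = (∫⁻ a, g a ∂ρ)⁻¹ * ∫⁻ a in s, g a ∂ρ := by
  rw [twist, smul_apply, withDensity_apply g hs, smul_eq_mul]

variable {ρ μ : Measure α} {g : α → ℝ≥0∞} {b c : ℝ≥0∞}

theorem setLIntegral_le_of_le_smul (hρ : ρ ≤ c • μ) (hg : ∀ a, g a ≤ b) (s : Set α) :
    ∫⁻ a in s, g a ∂ρ ≤ c * b * μ s := by
  calc ∫⁻ a in s, g a ∂ρ ≤ ∫⁻ _ in s, b ∂ρ := lintegral_mono hg
    _ = ρ s * b := by rw [setLIntegral_const, mul_comm]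
    _ ≤ c * μ s * b := by gcongr; exact hρ s
    _ = c * b * μ s := mul_right_comm _ _ _

theorem le_setLIntegral_of_smul_le (hρ : c • μ ≤ ρ) (hg : ∀ a, b ≤ g a) (s : Set α) :
    c * b * μ s ≤ ∫⁻ a in s, g a ∂ρ := by
  calc c * b * μ s = c * μ s * b := mul_right_comm _ _ _
    _ ≤ ρ s * b := by gcongr; exact hρ s
    _ = ∫⁻ _ in s, b ∂ρ := by rw [setLIntegral_const, mul_comm]
    _ ≤ ∫⁻ a in s, g a ∂ρ := lintegral_mono hg

variable [IsProbabilityMeasure μ] {cm cp gm gp : ℝ≥0∞}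

theorem smul_le_twist (hρm : cm • μ ≤ ρ) (hρp : ρ ≤ cp • μ) (hgm : ∀ a, gm ≤ g a)
    (hgp : ∀ a, g a ≤ gp) : (cm * gm / (cp * gp)) • μ ≤ ρ.twist g := by
  refine Measure.le_iff.2 fun s hs => ?_
  have hmass : ∫⁻ a, g a ∂ρ ≤ cp * gp := by
    simpa using setLIntegral_le_of_le_smul hρp hgp Set.univ
  calc (cm * gm / (cp * gp)) • μ s = (cp * gp)⁻¹ * (cm * gm * μ s) := by
        rw [smul_eq_mul, ENNReal.div_eq_inv_mul, mul_assoc]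
    _ ≤ (∫⁻ a, g a ∂ρ)⁻¹ * ∫⁻ a in s, g a ∂ρ := by
        gcongr
        exact le_setLIntegral_of_smul_le hρm hgm s
    _ = ρ.twist g s := (twist_apply ρ g hs).symm

theorem twist_le_smul (hρm : cm • μ ≤ ρ) (hρp : ρ ≤ cp • μ) (hgm : ∀ a, gm ≤ g a)
    (hgp : ∀ a, g a ≤ gp) : ρ.twist g ≤ (cp * gp / (cm * gm)) • μ := by
  refine Measure.le_iff.2 fun s hs => ?_
  have hmass : cm * gm ≤ ∫⁻ a, g a ∂ρ := by
    simpa using le_setLIntegral_of_smul_le hρm hgm Set.univ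
  calc ρ.twist g s = (∫⁻ a, g a ∂ρ)⁻¹ * ∫⁻ a in s, g a ∂ρ := twist_apply ρ g hs
    _ ≤ (cm * gm)⁻¹ * (cp * gp * μ s) := by
        gcongr
        exact setLIntegral_le_of_le_smul hρp hgp s
    _ = (cp * gp / (cm * gm)) • μ s := by
        rw [smul_eq_mul, ENNReal.div_eq_inv_mul, mul_assoc (cm * gm)⁻¹]

end MeasureTheory.Measure

theorem ENNReal.ofReal_mul_div_mul {a b c d : ℝ} (ha : 0 ≤ a) (hc : 0 ≤ c) (hcd : 0 < c * d) :
    ENNReal.ofReal (a * b / (c * d)) =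
      ENNReal.ofReal a * ENNReal.ofReal b / (ENNReal.ofReal c * ENNReal.ofReal d) := by
  rw [ENNReal.ofReal_div_of_pos hcd, ENNReal.ofReal_mul ha, ENNReal.ofReal_mul hc]

section ParticleKernel

omit [MeasurableSpace H]

variable {M : Env H → E → Measure E} {W : Env H → E → ℝ} {ω : Env H} {m : ℕ}
  {x : Fin m → E} {ν : Measure E}

theorem mixK_eq_inv_sum_smul_sum (hW : ∀ y, 0 ≤ W ω y) :
    mixK M W ω x = (∑ j, ENNReal.ofReal (W ω (x j)))⁻¹ •
      ∑ j, ENNReal.ofReal (W ω (x j)) • M ω (x j) := by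
  rw [mixK, ENNReal.ofReal_sum_of_nonneg fun j _ => hW (x j)]

omit [MeasurableSpace E] in
theorem sum_ofReal_ne_zero_of_adm (hW : ∀ y, 0 ≤ W ω y) (hx : Adm W ω x) :
    ∑ j, ENNReal.ofReal (W ω (x j)) ≠ 0 := by
  rw [← ENNReal.ofReal_sum_of_nonneg fun j _ => hW (x j)]
  exact (ENNReal.ofReal_pos.2 hx).ne'

theorem mixK_le_smul {c : ℝ≥0∞} (hW : ∀ y, 0 ≤ W ω y) (hx : Adm W ω x)
    (hM : ∀ y, M ω y ≤ c • ν) : mixK M W ω x ≤ c • ν := by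
  rw [mixK_eq_inv_sum_smul_sum hW]
  exact Measure.inv_sum_smul_sum_le (sum_ofReal_ne_zero_of_adm hW hx)
    (ENNReal.sum_ne_top.2 fun _ _ => ENNReal.ofReal_ne_top) fun j _ => hM (x j)

theorem smul_le_mixK {c : ℝ≥0∞} (hW : ∀ y, 0 ≤ W ω y) (hx : Adm W ω x)
    (hM : ∀ y, c • ν ≤ M ω y) : c • ν ≤ mixK M W ω x := by
  rw [mixK_eq_inv_sum_smul_sum hW]
  exact Measure.le_inv_sum_smul_sum (sum_ofReal_ne_zero_of_adm hW hx)
    (ENNReal.sum_ne_top.2 fun _ _ => ENNReal.ofReal_ne_top) fun j _ => hM (x j)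

theorem Mpart_mem_Icc [IsFiniteMeasure ν] (m₂ : ℕ) {cm cp : ℝ≥0∞} (hcp : cp ≠ ∞)
    (hW : ∀ y, 0 ≤ W ω y) (hx : Adm W ω x)
    (hMm : ∀ y, cm • ν ≤ M ω y) (hMp : ∀ y, M ω y ≤ cp • ν) :
    Mpart M W m₂ ω x ∈ Set.Icc (cm ^ m₂ • Measure.pi fun _ : Fin m₂ => ν)
      (cp ^ m₂ • Measure.pi fun _ : Fin m₂ => ν) := by
  have hlow := smul_le_mixK hW hx hMm
  have hup := mixK_le_smul hW hx hMp
  have := Measure.isFiniteMeasure_smul_of_ne_top hcp ν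
  have := isFiniteMeasure_of_le _ hup
  have := isFiniteMeasure_of_le _ hlow
  exact ⟨Measure.pow_smul_pi_le_pi hlow, Measure.pi_le_pow_smul_pi hup⟩

omit [MeasurableSpace E] in
theorem havg_mem_Icc {h : Env H → E → ℝ} (hm : m ≠ 0) {a b : ℝ}
    (hh : ∀ y, h ω y ∈ Set.Icc a b) (x : Fin m → E) : havg h ω x ∈ Set.Icc a b := by
  have hm_pos : (0 : ℝ) < m := by positivity
  rw [Set.mem_Icc, havg, le_div_iff₀ hm_pos, div_le_iff₀ hm_pos]
  constructor
  · simpa [mul_comm a] using Finset.card_nsmul_le_sum Finset.univ _ a fun j _ => (hh (x j)).1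
  · simpa [mul_comm b] using Finset.sum_le_card_nsmul Finset.univ _ b fun j _ => (hh (x j)).2

theorem Mtw_eq_twist (h : Env H → E → ℝ) (m₂ : ℕ) :
    Mtw M W h m₂ ω x = (Mpart M W m₂ ω x).twist fun u => ENNReal.ofReal (havg h (shift ω) u) :=
  rfl

end ParticleKernel

theorem twisted_kernel_in_class_general
    (M : Env H → E → Measure E) (W : Env H → E → ℝ)
    (hWnn : ∀ ω x, 0 ≤ W ω x)
    (m₁ m₂ : ℕ) (hm₂ : 1 ≤ m₂)
    -- (B2), minorisation/majorisation part
    (εm εp : ℝ) (hεm : 0 < εm) (hεmp : εm ≤ εp)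
    (ν : Measure E) [IsProbabilityMeasure ν]
    (hB2b : ∀ ω x, ∀ A : Set E, MeasurableSet A →
        ENNReal.ofReal εm * ν A ≤ M ω x A ∧ M ω x A ≤ ENNReal.ofReal εp * ν A)
    -- h: a positive, bounded measurable function
    (h : Env H → E → ℝ)
    (hm hp : ℝ) (hhm : 0 < hm) (hhmp : hm ≤ hp)
    (hhbd : ∀ ω x, hm ≤ h ω x ∧ h ω x ≤ hp) :
    (∀ ω : Env H, ∀ x : Fin m₁ → E, Adm W ω x →
      ∀ D : Set (Fin m₂ → E), MeasurableSet D →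
        ENNReal.ofReal (εm ^ m₂ * hm / (εp ^ m₂ * hp)) *
            (Measure.pi fun _ : Fin m₂ => ν) D
          ≤ Mtw M W h m₂ ω x D ∧
        Mtw M W h m₂ ω x D
          ≤ ENNReal.ofReal (εp ^ m₂ * hp / (εm ^ m₂ * hm)) *
              (Measure.pi fun _ : Fin m₂ => ν) D) ∧
    (Measure.pi fun _ : Fin m₂ => ν) ≪ (Measure.pi fun _ : Fin m₂ => ν) ∧
    ∫⁻ x', ((Measure.pi fun _ : Fin m₂ => ν).rnDeriv
        (Measure.pi fun _ : Fin m₂ => ν) x') ^ 2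
      ∂(Measure.pi fun _ : Fin m₂ => ν) = 1 := by
  refine ⟨fun ω x hx D _ => ?_, .rfl, ?_⟩
  · have hεp : 0 < εp := hεm.trans_le hεmp
    have hhp : 0 < hp := hhm.trans_le hhmp
    obtain ⟨hlow, hup⟩ := Mpart_mem_Icc m₂ ENNReal.ofReal_ne_top (hWnn ω) hx
      (fun y => Measure.le_iff.2 fun A hA => (hB2b ω y A hA).1)
      (fun y => Measure.le_iff.2 fun A hA => (hB2b ω y A hA).2)
    have hg (u : Fin m₂ → E) := havg_mem_Icc (by omega) (hhbd (shift ω)) u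
    have hgm (u) := ENNReal.ofReal_le_ofReal (hg u).1
    have hgp (u) := ENNReal.ofReal_le_ofReal (hg u).2
    rw [ENNReal.ofReal_mul_div_mul (by positivity) (by positivity) (by positivity),
      ENNReal.ofReal_mul_div_mul (by positivity) (by positivity) (by positivity),
      ENNReal.ofReal_pow hεm.le, ENNReal.ofReal_pow hεp.le, Mtw_eq_twist]
    exact ⟨Measure.smul_le_twist hlow hup hgm hgp D, Measure.twist_le_smul hlow hup hgm hgp D⟩
  · calc ∫⁻ x', ((Measure.pi fun _ : Fin m₂ => ν).rnDeriv
          (Measure.pi fun _ : Fin m₂ => ν) x') ^ 2 ∂(Measure.pi fun _ : Fin m₂ => ν)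
        = ∫⁻ _, 1 ∂(Measure.pi fun _ : Fin m₂ => ν) :=
          lintegral_congr_ae ((Measure.rnDeriv_self _).mono fun _ hx => by simp [hx])
      _ = 1 := by simp

/-- **The twisted kernel belongs to the class `𝕄^{m₁,m₂}`.** Assume (B2) and let
`h` be measurable with `0 < h₋ ≤ h ≤ h₊ < ∞`. Then the `h`-twisted particle kernel
satisfies the class bounds with `ν̃ = ν^{⊗m₂}`,
`ε̃₋ = ε₋^{m₂}h₋/(ε₊^{m₂}h₊)` and `ε̃₊ = ε₊^{m₂}h₊/(ε₋^{m₂}h₋)`; moreover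
`ν^{⊗m₂} ≪ ν̃` and `∫(dν^{⊗m₂}/dν̃)²dν̃ = 1 < ∞`. -/
theorem twisted_kernel_in_class
    (M : Env H → E → Measure E) (W : Env H → E → ℝ)
    (hMprob : ∀ ω x, IsProbabilityMeasure (M ω x))
    (hMmeas : Measurable fun p : Env H × E => M p.1 p.2)
    (hWmeas : Measurable fun p : Env H × E => W p.1 p.2)
    (hWnn : ∀ ω x, 0 ≤ W ω x)
    (m₁ m₂ : ℕ) (hm₁ : 1 ≤ m₁) (hm₂ : 1 ≤ m₂)
    -- (B2), minorisation/majorisation part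
    (εm εp : ℝ) (hεm : 0 < εm) (hεmp : εm ≤ εp)
    (ν : Measure E) [IsProbabilityMeasure ν]
    (hB2b : ∀ ω x, ∀ A : Set E, MeasurableSet A →
        ENNReal.ofReal εm * ν A ≤ M ω x A ∧ M ω x A ≤ ENNReal.ofReal εp * ν A)
    -- h: a positive, bounded measurable function
    (h : Env H → E → ℝ)
    (hhmeas : Measurable (fun p : Env H × E => h p.1 p.2))
    (hm hp : ℝ) (hhm : 0 < hm) (hhmp : hm ≤ hp)
    (hhbd : ∀ ω x, hm ≤ h ω x ∧ h ω x ≤ hp) :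
    (∀ ω : Env H, ∀ x : Fin m₁ → E, Adm W ω x →
      ∀ D : Set (Fin m₂ → E), MeasurableSet D →
        ENNReal.ofReal (εm ^ m₂ * hm / (εp ^ m₂ * hp)) *
            (Measure.pi fun _ : Fin m₂ => ν) D
          ≤ Mtw M W h m₂ ω x D ∧
        Mtw M W h m₂ ω x D
          ≤ ENNReal.ofReal (εp ^ m₂ * hp / (εm ^ m₂ * hm)) *
              (Measure.pi fun _ : Fin m₂ => ν) D) ∧
    (Measure.pi fun _ : Fin m₂ => ν) ≪ (Measure.pi fun _ : Fin m₂ => ν) ∧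
    ∫⁻ x', ((Measure.pi fun _ : Fin m₂ => ν).rnDeriv
        (Measure.pi fun _ : Fin m₂ => ν) x') ^ 2
      ∂(Measure.pi fun _ : Fin m₂ => ν) = 1 :=
  twisted_kernel_in_class_general M W hWnn m₁ m₂ hm₂ εm εp hεm hεmp ν hB2b h hm hp hhm hhmp hhbd

end
end
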